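/- Let G = (V' : V'', E) be a bipartite Δ-regular connected graph with |V'| = |V''| = n > 1, adjacency matrix A_G and second-eigenvalue ratio γ = γ_G. Let s = (s_u)_{u∈V'} and t = (t_v)_{v∈V''} be vectors in ℝⁿ, set σ = (1/n) Σ_{u∈V'} s_u and τ = (1/n) Σ_{v∈V''} t_v, let y = s − σ·𝟏 and z = t − τ·𝟏, and let x ∈ ℝ^{2n} be the concatenation of s and t. Then |⟨x, A_G x⟩ − 2στΔn| ≤ 2γΔ·‖y‖·‖z‖, where ⟨·,·⟩ is the standard inner product and ‖·‖ the Euclidean norm. -/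

import Mathlib

/-!
Write `s = y + σ𝟏` and `t = z + τ𝟏`. Bipartiteness makes `A_G = [[0, B], [Bᵀ, 0]]`, so
`⟨x, A_G x⟩ = 2⟨s, B t⟩`; since all row and column sums of `B` equal `Δ` while `y` and `z` sum
to zero, `⟨s, B t⟩ = ⟨y, B z⟩ + στΔn`. For every real `a` the vector `(a y, z)` is orthogonal to
`𝟏`, so the Rayleigh bound gives `2a⟨y, B z⟩ ≤ γΔ(a²‖y‖² + ‖z‖²)`, and the discriminant of this
quadratic in `a` yields `|⟨y, B z⟩| ≤ γΔ‖y‖‖z‖`.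
-/

open Matrix BigOperators

namespace Matrix

variable {α β R : Type*} [Fintype α] [Fintype β]

theorem sumElim_dotProduct_fromBlocks_zero_mulVec [CommSemiring R] (B : Matrix α β R)
    (p : α → R) (q : β → R) :
    Sum.elim p q ⬝ᵥ (fromBlocks 0 B Bᵀ 0 *ᵥ Sum.elim p q) = 2 * (p ⬝ᵥ (B *ᵥ q)) := by
  simp only [fromBlocks_mulVec, sumElim_dotProduct_sumElim, Sum.elim_comp_inl,
    Sum.elim_comp_inr, zero_mulVec, zero_add, add_zero, mulVec_transpose,
    dotProduct_comm q, ← dotProduct_mulVec]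
  ring

theorem dotProduct_mulVec_eq_dotProduct_mulVec_sub_add [CommRing R] {B : Matrix α β R} {c : R}
    (hrow : B *ᵥ 1 = c • 1) (hcol : 1 ᵥ* B = c • 1) {s : α → R} {t : β → R} {σ τ : R}
    (hs : ∑ i, (s i - σ) = 0) (ht : ∑ j, (t j - τ) = 0) :
    s ⬝ᵥ (B *ᵥ t) =
      (fun i => s i - σ) ⬝ᵥ (B *ᵥ fun j => t j - τ) + σ * τ * c * Fintype.card β := by
  have hs' : (fun i => s i - σ) = s - σ • 1 := by ext; simp
  have ht' : (fun j => t j - τ) = t - τ • 1 := by ext; simp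
  have hsum_s : ∑ i, s i = σ * Fintype.card α := by
    simpa [Finset.sum_sub_distrib, sub_eq_zero, mul_comm] using hs
  have hsum_t : ∑ j, t j = τ * Fintype.card β := by
    simpa [Finset.sum_sub_distrib, sub_eq_zero, mul_comm] using ht
  rw [hs', ht', mulVec_sub, mulVec_smul, hrow]
  simp only [sub_dotProduct, dotProduct_sub, smul_dotProduct, dotProduct_smul]
  rw [dotProduct_mulVec 1, hcol]
  simp only [smul_dotProduct, dotProduct_one, one_dotProduct, Pi.one_apply, Finset.sum_const,
    Finset.card_univ, nsmul_eq_mul, mul_one, hsum_s, hsum_t, smul_eq_mul]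
  ring

theorem dotProduct_mulVec_le_of_mem_upperBounds {ι : Type*} [Fintype ι] {A : Matrix ι ι ℝ}
    {v : ι → ℝ} {μ : ℝ}
    (hμ : μ ∈ upperBounds {ρ : ℝ | ∃ x : ι → ℝ, x ≠ 0 ∧ x ⬝ᵥ v = 0 ∧
        x ⬝ᵥ (A *ᵥ x) = ρ * (x ⬝ᵥ x)})
    {x : ι → ℝ} (hx : x ⬝ᵥ v = 0) : x ⬝ᵥ (A *ᵥ x) ≤ μ * (x ⬝ᵥ x) := by
  rcases eq_or_ne x 0 with rfl | hx0
  · simp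
  have hpos : 0 < x ⬝ᵥ x := by simpa using dotProduct_self_star_pos_iff.mpr hx0
  rw [← div_le_iff₀ hpos]
  exact hμ ⟨x, hx0, hx, (div_mul_cancel₀ _ hpos.ne').symm⟩

end Matrix

theorem Fintype.sum_sub_one_div_card_mul_sum_eq_zero {α K : Type*} [Fintype α] [Field K]
    [CharZero K] (f : α → K) : ∑ i, (f i - 1 / Fintype.card α * ∑ j, f j) = 0 := by
  rcases isEmpty_or_nonempty α with _ | _
  · simp
  have hcard : (Fintype.card α : K) ≠ 0 := Nat.cast_ne_zero.mpr Fintype.card_ne_zero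
  rw [Finset.sum_sub_distrib, Finset.sum_const, Finset.card_univ, nsmul_eq_mul]
  field_simp
  ring

theorem abs_le_mul_sqrt_mul_sqrt_of_forall {Q μ Y Z : ℝ} (hY : 0 ≤ Y) (hZ : 0 ≤ Z)
    (h : ∀ a : ℝ, 2 * a * Q ≤ μ * (a ^ 2 * Y + Z)) : |Q| ≤ μ * √Y * √Z := by
  have hdisc : discrim (μ * Y) (-2 * Q) (μ * Z) ≤ 0 :=
    discrim_le_zero fun a => by nlinarith [h a]
  have hsq : Q ^ 2 ≤ (μ * √Y * √Z) ^ 2 := by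
    rw [mul_pow, mul_pow, Real.sq_sqrt hY, Real.sq_sqrt hZ]
    unfold discrim at hdisc
    nlinarith
  have hnonneg : 0 ≤ μ * √Y * √Z := by
    rcases le_or_gt 0 μ with hμ | hμ
    · positivity
    · have : Z = 0 := by nlinarith [h 0]
      simp [this]
  exact abs_le.mpr (abs_le_of_sq_le_sq' hsq hnonneg)

namespace SimpleGraph

variable {α β R : Type*} {G : SimpleGraph (α ⊕ β)} [DecidableRel G.Adj]

theorem adjMatrix_eq_fromBlocks [Zero R] [One R]
    (hα : ∀ a a', ¬ G.Adj (.inl a) (.inl a')) (hβ : ∀ b b', ¬ G.Adj (.inr b) (.inr b')) :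
    G.adjMatrix R = fromBlocks 0 (G.adjMatrix R).toBlocks₁₂ (G.adjMatrix R).toBlocks₁₂ᵀ 0 := by
  ext (i | i) (j | j) <;> simp [hα, hβ, toBlocks₁₂, G.adj_comm]

theorem IsRegularOfDegree.mulVec_one_of_adjMatrix_eq_fromBlocks [Fintype α] [Fintype β]
    [CommSemiring R] {B : Matrix α β R} {d : ℕ} (hd : G.IsRegularOfDegree d)
    (hA : G.adjMatrix R = fromBlocks 0 B Bᵀ 0) :
    B *ᵥ 1 = (d : R) • 1 ∧ 1 ᵥ* B = (d : R) • 1 := by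
  have h : ∀ v, (G.adjMatrix R *ᵥ 1) v = d := fun v => by
    simpa using adjMatrix_mulVec_const_apply_of_regular (a := (1 : R)) hd (v := v)
  rw [hA, fromBlocks_mulVec] at h
  refine ⟨funext fun i => ?_, funext fun j => ?_⟩
  · simpa using h (.inl i)
  · simpa [mulVec_transpose] using h (.inr j)

end SimpleGraph

theorem stmt_5_general (n Δ : ℕ)
    (G : SimpleGraph (Fin n ⊕ Fin n)) [DecidableRel G.Adj]
    (hbipL : ∀ a b : Fin n, ¬ G.Adj (Sum.inl a) (Sum.inl b))
    (hbipR : ∀ a b : Fin n, ¬ G.Adj (Sum.inr a) (Sum.inr b))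
    (hreg : ∀ v, G.degree v = Δ)
    (γ : ℝ)
    (hγ : IsGreatest {ρ : ℝ | ∃ x : (Fin n ⊕ Fin n) → ℝ, x ≠ 0 ∧
        (x ⬝ᵥ (fun _ => 1)) = 0 ∧
        x ⬝ᵥ ((G.adjMatrix ℝ).mulVec x) = ρ * (x ⬝ᵥ x)} (γ * Δ))
    (s t : Fin n → ℝ) (σ τ : ℝ)
    (hσ : σ = (1 / (n : ℝ)) * ∑ u : Fin n, s u)
    (hτ : τ = (1 / (n : ℝ)) * ∑ v : Fin n, t v) :
    |(Sum.elim s t) ⬝ᵥ ((G.adjMatrix ℝ).mulVec (Sum.elim s t)) - 2 * σ * τ * Δ * n|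
      ≤ 2 * γ * Δ * Real.sqrt (∑ u : Fin n, (s u - σ) ^ 2)
          * Real.sqrt (∑ v : Fin n, (t v - τ) ^ 2) := by
  set B := (G.adjMatrix ℝ).toBlocks₁₂
  have hA : G.adjMatrix ℝ = fromBlocks 0 B Bᵀ 0 := G.adjMatrix_eq_fromBlocks hbipL hbipR
  obtain ⟨hrow, hcol⟩ :=
    SimpleGraph.IsRegularOfDegree.mulVec_one_of_adjMatrix_eq_fromBlocks hreg hA
  have hs : ∑ u, (s u - σ) = 0 := by
    simpa only [Fintype.card_fin, ← hσ] using Fintype.sum_sub_one_div_card_mul_sum_eq_zero s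
  have ht : ∑ v, (t v - τ) = 0 := by
    simpa only [Fintype.card_fin, ← hτ] using Fintype.sum_sub_one_div_card_mul_sum_eq_zero t
  have hquad (p q : Fin n → ℝ) :
      Sum.elim p q ⬝ᵥ (G.adjMatrix ℝ *ᵥ Sum.elim p q) = 2 * (p ⬝ᵥ (B *ᵥ q)) := by
    rw [hA]
    exact sumElim_dotProduct_fromBlocks_zero_mulVec B p q
  rw [hquad, dotProduct_mulVec_eq_dotProduct_mulVec_sub_add hrow hcol hs ht, Fintype.card_fin]
  set y : Fin n → ℝ := fun u => s u - σ
  set z : Fin n → ℝ := fun v => t v - τ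
  have hray (a : ℝ) : 2 * a * (y ⬝ᵥ (B *ᵥ z)) ≤ γ * Δ * (a ^ 2 * (y ⬝ᵥ y) + z ⬝ᵥ z) := by
    have := dotProduct_mulVec_le_of_mem_upperBounds hγ.2 (x := Sum.elim (a • y) z)
      (by simp [dotProduct, Fintype.sum_sum_type, ← Finset.mul_sum, hs, ht])
    simp only [hquad, sumElim_dotProduct_sumElim, smul_dotProduct, dotProduct_smul, smul_eq_mul]
      at this
    linarith
  have hY : ∑ u, (s u - σ) ^ 2 = y ⬝ᵥ y := by simp [dotProduct, sq, y]
  have hZ : ∑ v, (t v - τ) ^ 2 = z ⬝ᵥ z := by simp [dotProduct, sq, z]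
  have hQ := abs_le_mul_sqrt_mul_sqrt_of_forall (by simpa using dotProduct_star_self_nonneg y)
    (by simpa using dotProduct_star_self_nonneg z) hray
  rw [hY, hZ]
  calc |2 * (y ⬝ᵥ (B *ᵥ z) + σ * τ * Δ * n) - 2 * σ * τ * Δ * n| = 2 * |y ⬝ᵥ (B *ᵥ z)| := by
        rw [← abs_two, ← abs_mul]
        ring_nf
    _ ≤ 2 * γ * Δ * √(y ⬝ᵥ y) * √(z ⬝ᵥ z) := by linarith

/-- Quadratic-form estimate for bipartite expanders.
`G` is a bipartite `Δ`-regular connected graph on parts `V' = Fin n` (via `Sum.inl`) and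
`V'' = Fin n` (via `Sum.inr`), `n > 1`, adjacency matrix `A_G = G.adjMatrix ℝ`, and
second-eigenvalue ratio `γ` (i.e. `γ * Δ` is the second largest eigenvalue of `A_G`,
characterized as the greatest Rayleigh quotient over nonzero vectors orthogonal to the
all-one vector).  For vectors `s, t ∈ ℝⁿ` with averages `σ, τ`, the concatenated vector
`x = Sum.elim s t` satisfies `|⟨x, A_G x⟩ − 2στΔn| ≤ 2γΔ‖s − σ𝟏‖·‖t − τ𝟏‖`. -/
theorem stmt_5 (n Δ : ℕ) (hn : 1 < n) (hΔ : 0 < Δ)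
    (G : SimpleGraph (Fin n ⊕ Fin n)) [DecidableRel G.Adj]
    (hbipL : ∀ a b : Fin n, ¬ G.Adj (Sum.inl a) (Sum.inl b))
    (hbipR : ∀ a b : Fin n, ¬ G.Adj (Sum.inr a) (Sum.inr b))
    (hreg : ∀ v, G.degree v = Δ)
    (hconn : G.Connected)
    (γ : ℝ)
    (hγ : IsGreatest {ρ : ℝ | ∃ x : (Fin n ⊕ Fin n) → ℝ, x ≠ 0 ∧
        (x ⬝ᵥ (fun _ => 1)) = 0 ∧
        x ⬝ᵥ ((G.adjMatrix ℝ).mulVec x) = ρ * (x ⬝ᵥ x)} (γ * Δ))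
    (s t : Fin n → ℝ) (σ τ : ℝ)
    (hσ : σ = (1 / (n : ℝ)) * ∑ u : Fin n, s u)
    (hτ : τ = (1 / (n : ℝ)) * ∑ v : Fin n, t v) :
    |(Sum.elim s t) ⬝ᵥ ((G.adjMatrix ℝ).mulVec (Sum.elim s t)) - 2 * σ * τ * Δ * n|
      ≤ 2 * γ * Δ * Real.sqrt (∑ u : Fin n, (s u - σ) ^ 2)
          * Real.sqrt (∑ v : Fin n, (t v - τ) ^ 2) :=
  stmt_5_general n Δ G hbipL hbipR hreg γ hγ s t σ τ hσ hτ
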